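/- Assume π₂ ≠ 0 and π₄ ≠ 0. For (η,λ) ∈ F², set B_{η,λ} = B ∩ span{x^{α,i} : (α₂,α₄) = (η,λ), i₂ = i₄ = 0}. Then B_{0,0} is an abelian Lie subalgebra of B, each B_{η,λ} is a module over B_{0,0} under the adjoint action, and for (η,λ) ≠ (0,0) with (η,λ) in the image of α ↦ (α₂,α₄), the B_{0,0}-module B_{η,λ} is cyclic, and its generators are exactly the nonzero scalar multiples of the elements x^{α,0} with α ∈ Γ, (α₂,α₄) = (η,λ). -/

import Mathlib

/-!
For `w ∈ A_{0,0}` and `v ∈ A_{η,λ}` the bracket is a product, `[w, v] = m(w) v` with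
`m(w) = η x^σ ∂₁ w + λ (x^δ ∂₃ w + w)` (`adFactor`).  Hence `B_{0,0}` is abelian, and a subspace
`N` stable under `B_{0,0}` and containing `x^{α,0}` contains `x^{α,0} R`, where `R` (`adAlg`) is
the unital algebra generated by `m(B_{0,0})`.  Enough monomials `x^{β,k}` lie in `B_{0,0}` (via
`[x^{β',k}, x^{γ-β',0}] = -β'₂ x^σ ∂₁ x^{γ,k}` for `β'₄ = 0 ≠ β'₂`) to show that `R` contains
every monomial of weight `(0,0)`, so `x^{α,0}` generates `B_{η,λ}`.  Conversely, if `u`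
generates, then `x^{α,0} ∈ u A_{0,0}`; since `Γ × J` is torsion-free, a product of two elements
of `A` is a monomial only if both factors are, and `J ⊆ ℕ⁴` forces `u` to be a multiple of some
`x^{α,0}`.
-/

namespace SuBlock

variable (F : Type*) [Field F]

def sigmaV : Fin 4 → F := ![1, 0, 1, 0]

def deltaV (d : F) : Fin 4 → F := ![0, 0, d, 0]

/-- The data `(Γ, J, δ)` of the paper: `δ₃ ∈ F \ {0}`, `Γ ≤ F⁴` an additive subgroup
containing `σ = (1,0,1,0)` and `δ = (0,0,δ₃,0)`, with `ker π₄ ⊄ ker π₂` whenever `π₂ ≠ 0`,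
and `J_p` encoded by `m p : Bool` (`J_p = ℕ` iff `m p = true`), with `J_q ≠ {0}`
whenever `π_q = 0`, for `q = 2,4`.  (Coordinates `1,2,3,4` are `Fin 4` indices `0,1,2,3`.) -/
structure Datum where
  d3 : F
  d3_ne : d3 ≠ 0
  Γ : AddSubgroup (Fin 4 → F)
  m : Fin 4 → Bool
  sigma_mem : sigmaV F ∈ Γ
  delta_mem : deltaV F d3 ∈ Γ
  ker_cond : (∃ α ∈ Γ, α 1 ≠ 0) → ∃ α ∈ Γ, α 3 = 0 ∧ α 1 ≠ 0
  J2_cond : (∀ α ∈ Γ, α 1 = 0) → m 1 = true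
  J4_cond : (∀ α ∈ Γ, α 3 = 0) → m 3 = true

variable {F}

/-- The monoid `J = J₁ × J₂ × J₃ × J₄ ⊆ ℕ⁴`, where `J_p = ℕ` if `m p = true` and
`J_p = {0}` otherwise. -/
def Jmon (m : Fin 4 → Bool) : AddSubmonoid (Fin 4 → ℕ) where
  carrier := {i | ∀ p, m p = false → i p = 0}
  zero_mem' := fun p _ => rfl
  add_mem' := fun ha hb p hp => by
    simp only [Set.mem_setOf_eq] at ha hb
    simp [Pi.add_apply, ha p hp, hb p hp]

/-- The commutative associative algebra `A = A(Γ,J)`, the semigroup algebra of `Γ × J`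
with basis `x^{α,i}`, `(α,i) ∈ Γ × J`. -/
abbrev Alg (D : Datum F) : Type _ := AddMonoidAlgebra F (↥D.Γ × ↥(Jmon D.m))

/-- The basis element `x^{α,i}`. -/
noncomputable def X (D : Datum F) (g : ↥D.Γ × ↥(Jmon D.m)) : Alg D :=
  AddMonoidAlgebra.single g 1

/-- `i - 1_[p]` (truncated subtraction). -/
def subE {m : Fin 4 → Bool} (i : ↥(Jmon m)) (p : Fin 4) : ↥(Jmon m) :=
  ⟨i.1 - Pi.single p 1, fun q hq => by
    have h : i.1 q = 0 := i.2 q hq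
    simp only [Pi.sub_apply, h, Nat.zero_sub]⟩

/-- `∂_p x^{α,i} = α_p x^{α,i} + i_p x^{α,i-1_[p]}` (coordinates are `Fin 4` indexed). -/
noncomputable def Dmon (D : Datum F) (p : Fin 4) (g : ↥D.Γ × ↥(Jmon D.m)) : Alg D :=
  (g.1.1 p) • X D g + ((g.2.1 p : F)) • X D (g.1, subE g.2 p)

/-- The derivation `∂_p` of `A`, extended linearly from its values on the basis. -/
noncomputable def Dop (D : Datum F) (p : Fin 4) (u : Alg D) : Alg D :=
  Finsupp.sum u.coeff fun g c => c • Dmon D p g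

/-- The Lie bracket (1.6):
`[u,v] = x^{σ,0}(∂₁(u)∂₂(v) − ∂₁(v)∂₂(u)) + (x^{δ,0}∂₃(u) + u)∂₄(v) − ∂₄(u)(x^{δ,0}∂₃(v) + v)`. -/
noncomputable def br (D : Datum F) (u v : Alg D) : Alg D :=
  X D (⟨sigmaV F, D.sigma_mem⟩, 0) * (Dop D 0 u * Dop D 1 v - Dop D 0 v * Dop D 1 u)
    + (X D (⟨deltaV F D.d3, D.delta_mem⟩, 0) * Dop D 2 u + u) * Dop D 3 v
    - Dop D 3 u * (X D (⟨deltaV F D.d3, D.delta_mem⟩, 0) * Dop D 2 v + v)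

/-- The derived subalgebra `B = [A,A]`, the span of all brackets. -/
noncomputable def Bspan (D : Datum F) : Submodule F (Alg D) :=
  Submodule.span F {w | ∃ u v : Alg D, w = br D u v}


/-- `B_{η,λ} = B ∩ span{x^{α,i} : (α₂,α₄) = (η,λ), i₂ = i₄ = 0}`. -/
noncomputable def Bpart (D : Datum F) (e l : F) : Submodule F (Alg D) :=
  Bspan D ⊓ Submodule.span F {w : Alg D | ∃ (α : D.Γ) (i : ↥(Jmon D.m)),
    α.1 1 = e ∧ α.1 3 = l ∧ i.1 1 = 0 ∧ i.1 3 = 0 ∧ w = X D (α, i)}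

open AddMonoidAlgebra in
theorem _root_.AddMonoidAlgebra.exists_eq_single_of_mul_eq_single {k G : Type*} [Semiring k]
    [NoZeroDivisors k] [Add G] [TwoUniqueSums G] {f g : AddMonoidAlgebra k G} {x : G} {c : k}
    (hc : c ≠ 0) (h : f * g = single x c) : ∃ y z b, b ≠ 0 ∧ y + z = x ∧ f = single y b := by
  classical
  have hx : x ∈ (f * g).coeff.support := by simp [h, hc]
  obtain ⟨y₀, hy₀, z, hz, hyz⟩ := Finset.mem_add.mp (support_coeff_mul_subset f g hx)
  have hcard : f.coeff.support.card = 1 := by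
    refine le_antisymm ?_ (Finset.card_pos.mpr ⟨y₀, hy₀⟩)
    by_contra! hlt
    obtain ⟨p, hp, q, hq, hpq, hup, huq⟩ := TwoUniqueSums.uniqueAdd_of_one_lt_card
      (hlt.trans_le (Nat.le_mul_of_pos_right _ (Finset.card_pos.mpr ⟨z, hz⟩)))
    have onto_x : ∀ r ∈ f.coeff.support ×ˢ g.coeff.support,
        UniqueAdd f.coeff.support g.coeff.support r.1 r.2 → r.1 + r.2 = x := by
      intro r hr hu
      have hr' := Finset.mem_product.mp hr
      have hne : (f * g).coeff (r.1 + r.2) ≠ 0 := by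
        rw [coeff_mul_add_of_uniqueAdd hu]
        exact mul_ne_zero (Finsupp.mem_support_iff.mp hr'.1) (Finsupp.mem_support_iff.mp hr'.2)
      rw [h, coeff_single, Finsupp.single_apply_ne_zero] at hne
      exact hne.1
    have hpq' := (onto_x p hp hup).trans (onto_x q hq huq).symm
    obtain ⟨h1, h2⟩ := hup (Finset.mem_product.mp hq).1 (Finset.mem_product.mp hq).2 hpq'.symm
    exact hpq (Prod.ext h1.symm h2.symm)
  obtain ⟨y, b, hb, hfy⟩ := Finsupp.card_support_eq_one'.mp hcard
  refine ⟨y, z, b, hb, ?_, coeff_inj.mp (by rw [hfy, coeff_single])⟩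
  rw [hfy, Finsupp.support_single _ hb, Finset.mem_singleton] at hy₀
  rwa [← hy₀]

lemma mem_of_smul_mem_of_ne_zero {K M S : Type*} [Field K] [AddCommMonoid M] [Module K M]
    [SetLike S M] [SMulMemClass S K M] {s : S} {c : K} (hc : c ≠ 0) {x : M} (h : c • x ∈ s) :
    x ∈ s := by
  simpa [smul_smul, inv_mul_cancel₀ hc] using SMulMemClass.smul_mem c⁻¹ h

def sigmaΓ (D : Datum F) : D.Γ := ⟨sigmaV F, D.sigma_mem⟩

def deltaΓ (D : Datum F) : D.Γ := ⟨deltaV F D.d3, D.delta_mem⟩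

@[simp] lemma coe_sigmaΓ (D : Datum F) : ((sigmaΓ D : D.Γ) : Fin 4 → F) = ![1, 0, 1, 0] := rfl

@[simp] lemma coe_deltaΓ (D : Datum F) : ((deltaΓ D : D.Γ) : Fin 4 → F) = ![0, 0, D.d3, 0] :=
  rfl

def Γ₀ (D : Datum F) : AddSubgroup D.Γ where
  carrier := {α | α.1 1 = 0 ∧ α.1 3 = 0}
  add_mem' := by simp_all
  zero_mem' := by simp
  neg_mem' := by simp_all

def J₀ (m : Fin 4 → Bool) : AddSubmonoid ↥(Jmon m) where
  carrier := {k | k.1 1 = 0 ∧ k.1 3 = 0}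
  add_mem' := by simp_all
  zero_mem' := by simp

/-- `A_{η,λ}`; `Bpart D e l` is `Bspan D ⊓ Apart D e l` by definition. -/
noncomputable def Apart (D : Datum F) (e l : F) : Submodule F (Alg D) :=
  Submodule.span F {w : Alg D | ∃ (α : D.Γ) (i : ↥(Jmon D.m)),
    α.1 1 = e ∧ α.1 3 = l ∧ i.1 1 = 0 ∧ i.1 3 = 0 ∧ w = X D (α, i)}

def IsAdStable (D : Datum F) (N : Submodule F (Alg D)) : Prop :=
  ∀ w ∈ Bpart D 0 0, ∀ v ∈ N, br D w v ∈ N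

section

variable {D : Datum F} {e l e' l' : F} {u v w : Alg D}

lemma mem_Γ₀ {α : D.Γ} : α ∈ Γ₀ D ↔ α.1 1 = 0 ∧ α.1 3 = 0 := Iff.rfl

lemma mem_J₀ {m : Fin 4 → Bool} {k : ↥(Jmon m)} : k ∈ J₀ m ↔ k.1 1 = 0 ∧ k.1 3 = 0 := Iff.rfl

variable (D) in
lemma sigmaΓ_mem_Γ₀ : sigmaΓ D ∈ Γ₀ D := by simp [mem_Γ₀]

variable (D) in
lemma deltaΓ_mem_Γ₀ : deltaΓ D ∈ Γ₀ D := by simp [mem_Γ₀]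

lemma subE_apply {m : Fin 4 → Bool} (k : ↥(Jmon m)) (p q : Fin 4) :
    (subE k p).1 q = k.1 q - if q = p then 1 else 0 := by
  simp [subE, Pi.single_apply]

lemma subE_mem_J₀ {m : Fin 4 → Bool} {k : ↥(Jmon m)} (hk : k ∈ J₀ m) (p : Fin 4) :
    subE k p ∈ J₀ m := by
  simp_all [mem_J₀, subE_apply]

lemma X_mul_X (g h : ↥D.Γ × ↥(Jmon D.m)) : X D g * X D h = X D (g + h) := by
  simp [X, AddMonoidAlgebra.single_mul_single]

variable (D) in
lemma X_zero_zero : X D (0, 0) = 1 := rfl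

lemma Dop_X (p : Fin 4) (g : ↥D.Γ × ↥(Jmon D.m)) : Dop D p (X D g) = Dmon D p g := by
  simp [Dop, X]

variable (D) in
noncomputable def DopL (p : Fin 4) : Alg D →ₗ[F] Alg D :=
  Finsupp.linearCombination F (Dmon D p) ∘ₗ (AddMonoidAlgebra.coeffLinearEquiv F).toLinearMap

@[simp] lemma DopL_apply (p : Fin 4) (u : Alg D) : DopL D p u = Dop D p u := by
  simp [DopL, Dop, Finsupp.linearCombination_apply]

lemma X_mem_Apart {α : D.Γ} {i : ↥(Jmon D.m)} (h1 : α.1 1 = e) (h3 : α.1 3 = l)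
    (hi : i ∈ J₀ D.m) : X D (α, i) ∈ Apart D e l :=
  Submodule.subset_span ⟨α, i, h1, h3, hi.1, hi.2, rfl⟩

lemma X_mem_Apart_zero {α : D.Γ} {i : ↥(Jmon D.m)} (hα : α ∈ Γ₀ D) (hi : i ∈ J₀ D.m) :
    X D (α, i) ∈ Apart D 0 0 :=
  X_mem_Apart hα.1 hα.2 hi

variable (D) in
lemma one_mem_Apart_zero : (1 : Alg D) ∈ Apart D 0 0 :=
  X_mem_Apart_zero (zero_mem _) (zero_mem _)

lemma Dop_one_of_mem_Apart (hu : u ∈ Apart D e l) : Dop D 1 u = e • u := by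
  suffices Apart D e l ≤ LinearMap.ker (DopL D 1 - e • LinearMap.id) by
    simpa [sub_eq_zero] using this hu
  refine Submodule.span_le.mpr ?_
  rintro _ ⟨α, i, hα, -, hi, -, rfl⟩
  simp [Dop_X, Dmon, hα, hi]

lemma Dop_three_of_mem_Apart (hu : u ∈ Apart D e l) : Dop D 3 u = l • u := by
  suffices Apart D e l ≤ LinearMap.ker (DopL D 3 - l • LinearMap.id) by
    simpa [sub_eq_zero] using this hu
  refine Submodule.span_le.mpr ?_
  rintro _ ⟨α, i, -, hα, -, hi, rfl⟩
  simp [Dop_X, Dmon, hα, hi]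

lemma Dop_mem_Apart (p : Fin 4) (hu : u ∈ Apart D e l) : Dop D p u ∈ Apart D e l := by
  suffices Apart D e l ≤ (Apart D e l).comap (DopL D p) from this hu
  refine Submodule.span_le.mpr ?_
  rintro _ ⟨α, i, hα1, hα3, hi1, hi3, rfl⟩
  have hi : i ∈ J₀ D.m := ⟨hi1, hi3⟩
  simp only [SetLike.mem_coe, Submodule.mem_comap, DopL_apply, Dop_X, Dmon]
  exact add_mem (Submodule.smul_mem _ _ (X_mem_Apart hα1 hα3 hi))
    (Submodule.smul_mem _ _ (X_mem_Apart hα1 hα3 (subE_mem_J₀ hi p)))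

lemma mul_mem_Apart (hu : u ∈ Apart D e l) (hv : v ∈ Apart D e' l') :
    u * v ∈ Apart D (e + e') (l + l') := by
  suffices Apart D e l * Apart D e' l' ≤ Apart D (e + e') (l + l') from
    this (Submodule.mul_mem_mul hu hv)
  rw [Apart, Apart, Submodule.span_mul_span]
  refine Submodule.span_le.mpr ?_
  rintro _ ⟨_, ⟨α, i, hα1, hα3, hi1, hi3, rfl⟩, _, ⟨β, j, hβ1, hβ3, hj1, hj3, rfl⟩, rfl⟩
  simp only [SetLike.mem_coe, X_mul_X, Prod.mk_add_mk]
  exact X_mem_Apart (by simp [hα1, hβ1]) (by simp [hα3, hβ3])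
    (add_mem (show i ∈ J₀ D.m from ⟨hi1, hi3⟩) ⟨hj1, hj3⟩)

lemma weight_eq_of_mem_support (hu : u ∈ Apart D e l) {g : ↥D.Γ × ↥(Jmon D.m)}
    (hg : g ∈ u.coeff.support) : g.1.1 1 = e ∧ g.1.1 3 = l := by
  suffices Apart D e l ≤ (Finsupp.supported F F {g | g.1.1 1 = e ∧ g.1.1 3 = l}).comap
      (AddMonoidAlgebra.coeffLinearEquiv F).toLinearMap from
    (Finsupp.mem_supported F _).mp (this hu) hg
  refine Submodule.span_le.mpr ?_
  rintro _ ⟨α, i, hα1, hα3, -, -, rfl⟩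
  exact Finsupp.single_mem_supported F _ ⟨hα1, hα3⟩

lemma br_of_mem_Apart (hu : u ∈ Apart D e l) (hv : v ∈ Apart D e' l') :
    br D u v = X D (sigmaΓ D, 0) * (e' • (Dop D 0 u * v) - e • (Dop D 0 v * u))
      + l' • ((X D (deltaΓ D, 0) * Dop D 2 u + u) * v)
      - l • (u * (X D (deltaΓ D, 0) * Dop D 2 v + v)) := by
  rw [br, Dop_one_of_mem_Apart hu, Dop_one_of_mem_Apart hv, Dop_three_of_mem_Apart hu,
    Dop_three_of_mem_Apart hv]
  simp only [Algebra.smul_def, sigmaΓ, deltaΓ]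
  ring

variable (D) in
noncomputable def adFactor (e l : F) : Alg D →ₗ[F] Alg D :=
  e • (LinearMap.mulLeft F (X D (sigmaΓ D, 0)) ∘ₗ DopL D 0)
    + l • (LinearMap.mulLeft F (X D (deltaΓ D, 0)) ∘ₗ DopL D 2) + l • LinearMap.id

lemma adFactor_apply (w : Alg D) :
    adFactor D e l w = e • (X D (sigmaΓ D, 0) * Dop D 0 w)
      + l • (X D (deltaΓ D, 0) * Dop D 2 w) + l • w := by
  simp [adFactor]

lemma br_eq_adFactor_mul (hw : w ∈ Apart D 0 0) (hv : v ∈ Apart D e l) :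
    br D w v = adFactor D e l w * v := by
  rw [br_of_mem_Apart hw hv, adFactor_apply]
  simp only [Algebra.smul_def, map_zero]
  ring

lemma br_eq_zero_of_mem_Apart_zero (hw : w ∈ Apart D 0 0) (hv : v ∈ Apart D 0 0) :
    br D w v = 0 := by
  simp [br_eq_adFactor_mul hw hv, adFactor_apply]

lemma adFactor_mem_Apart_zero (hw : w ∈ Apart D 0 0) : adFactor D e l w ∈ Apart D 0 0 := by
  have hσ := X_mem_Apart_zero (sigmaΓ_mem_Γ₀ D) (zero_mem (J₀ D.m))
  have hδ := X_mem_Apart_zero (deltaΓ_mem_Γ₀ D) (zero_mem (J₀ D.m))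
  rw [adFactor_apply]
  refine add_mem (add_mem (Submodule.smul_mem _ _ ?_) (Submodule.smul_mem _ _ ?_))
    (Submodule.smul_mem _ _ hw)
  · simpa using mul_mem_Apart hσ (Dop_mem_Apart 0 hw)
  · simpa using mul_mem_Apart hδ (Dop_mem_Apart 2 hw)

lemma br_mem_Bpart (hw : w ∈ Bpart D 0 0) (hv : v ∈ Bpart D e l) : br D w v ∈ Bpart D e l := by
  refine ⟨Submodule.subset_span ⟨w, v, rfl⟩, ?_⟩
  change br D w v ∈ Apart D e l
  rw [br_eq_adFactor_mul hw.2 hv.2]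
  simpa using mul_mem_Apart (adFactor_mem_Apart_zero hw.2) hv.2

lemma adFactor_X (γ : D.Γ) (k : ↥(Jmon D.m)) :
    adFactor D e l (X D (γ, k)) = (e * γ.1 0) • X D (sigmaΓ D + γ, k)
      + (e * k.1 0) • X D (sigmaΓ D + γ, subE k 0) + (l * γ.1 2) • X D (deltaΓ D + γ, k)
      + (l * k.1 2) • X D (deltaΓ D + γ, subE k 2) + l • X D (γ, k) := by
  simp only [adFactor_apply, Dop_X, Dmon, mul_add, mul_smul_comm, X_mul_X, Prod.mk_add_mk,
    zero_add]
  module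

lemma adFactor_X_mk_zero (γ : D.Γ) :
    adFactor D e l (X D (γ, 0)) = (e * γ.1 0) • X D (sigmaΓ D + γ, 0)
      + (l * γ.1 2) • X D (deltaΓ D + γ, 0) + l • X D (γ, 0) := by
  simp [adFactor_X]

lemma adFactor_X_eq_mul_add (γ : D.Γ) (k : ↥(Jmon D.m)) :
    adFactor D e l (X D (γ, k)) = adFactor D e l (X D (γ, 0)) * X D (0, k)
      + e • (k.1 0 : F) • X D (sigmaΓ D + γ, subE k 0)
      + l • (k.1 2 : F) • X D (deltaΓ D + γ, subE k 2) := by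
  rw [adFactor_X, adFactor_X_mk_zero]
  simp only [add_mul, smul_mul_assoc, X_mul_X, Prod.mk_add_mk, add_zero, zero_add]
  module

lemma adFactor_X_mul_adFactor_X (γ μ : D.Γ) :
    adFactor D e l (X D (γ, 0)) * adFactor D e l (X D (μ - γ, 0))
      = (e ^ 2 * γ.1 0 * (μ.1 0 - γ.1 0)) • X D (sigmaΓ D + sigmaΓ D + μ, 0)
        + (e * l * (γ.1 0 * (μ.1 2 - γ.1 2) + γ.1 2 * (μ.1 0 - γ.1 0)))
          • X D (sigmaΓ D + deltaΓ D + μ, 0)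
        + (e * l * μ.1 0) • X D (sigmaΓ D + μ, 0)
        + (l ^ 2 * γ.1 2 * (μ.1 2 - γ.1 2)) • X D (deltaΓ D + deltaΓ D + μ, 0)
        + (l ^ 2 * μ.1 2) • X D (deltaΓ D + μ, 0) + l ^ 2 • X D (μ, 0) := by
  simp only [adFactor_X_mk_zero, AddSubgroup.coe_sub, Pi.sub_apply, add_mul, mul_add,
    smul_mul_smul_comm, X_mul_X, Prod.mk_add_mk, add_zero]
  abel_nf
  module

lemma X_sigma_mul_Dop_X_mem_Bspan (h2 : ∃ α ∈ D.Γ, α 1 ≠ 0) {γ : D.Γ} (hγ : γ ∈ Γ₀ D)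
    {k : ↥(Jmon D.m)} (hk : k ∈ J₀ D.m) :
    X D (sigmaΓ D, 0) * Dop D 0 (X D (γ, k)) ∈ Bspan D := by
  obtain ⟨β, hβΓ, hβ3, hβ1⟩ := D.ker_cond h2
  set b : D.Γ := ⟨β, hβΓ⟩
  have hbr : br D (X D (b, k)) (X D (γ - b, 0))
      = (-β 1) • (X D (sigmaΓ D, 0) * Dop D 0 (X D (γ, k))) := by
    rw [br_of_mem_Apart (X_mem_Apart rfl hβ3 hk)
      (X_mem_Apart (e := -β 1) (l := 0) (by simp [hγ.1, b]) (by simp [hγ.2, hβ3, b])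
        (zero_mem _))]
    simp only [Dop_X, Dmon, add_mul, smul_mul_assoc, X_mul_X, Prod.mk_add_mk, add_sub_cancel,
      zero_add, add_zero]
    simp only [b, smul_add, neg_smul, AddSubgroupClass.coe_sub, Pi.sub_apply, sub_add_cancel,
      ZeroMemClass.coe_zero, Pi.zero_apply, Nat.cast_zero, zero_smul, add_zero, mul_sub, mul_add,
      mul_neg, Algebra.mul_smul_comm, X_mul_X, Prod.mk_add_mk, zero_add, add_sub_cancel, sub_zero]
    module
  exact mem_of_smul_mem_of_ne_zero (neg_ne_zero.mpr hβ1)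
    (hbr ▸ Submodule.subset_span ⟨_, _, rfl⟩)

lemma X_mem_Bpart_zero (h2 : ∃ α ∈ D.Γ, α 1 ≠ 0) {β : D.Γ} (hβ : β ∈ Γ₀ D)
    (hβ0 : β.1 0 ≠ 1) {k : ↥(Jmon D.m)} (hk : k ∈ J₀ D.m) : X D (β, k) ∈ Bpart D 0 0 := by
  refine ⟨?_, X_mem_Apart_zero hβ hk⟩
  have step : ∀ k ∈ J₀ D.m, (k.1 0 : F) • X D (β, subE k 0) ∈ Bspan D → X D (β, k) ∈ Bspan D := by
    intro k hk hlow
    have hQ := X_sigma_mul_Dop_X_mem_Bspan h2 (sub_mem hβ (sigmaΓ_mem_Γ₀ D)) hk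
    have hβσ : sigmaΓ D + (β - sigmaΓ D) = β := add_sub_cancel _ _
    simp only [Dop_X, Dmon, mul_add, mul_smul_comm, X_mul_X, Prod.mk_add_mk, zero_add, hβσ] at hQ
    have h := sub_mem hQ hlow
    rw [add_sub_cancel_right] at h
    exact mem_of_smul_mem_of_ne_zero (by simpa [sub_eq_zero] using hβ0) h
  induction hn : k.1 0 generalizing k with
  | zero => exact step k hk (by simp [hn])
  | succ n ih =>
    exact step k hk (Submodule.smul_mem _ _ (ih (subE_mem_J₀ hk 0) (by simp [subE_apply, hn])))

lemma X_mem_Bspan_of_weight_ne_zero (hel : (e, l) ≠ (0, 0)) {α : D.Γ} (h1 : α.1 1 = e)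
    (h3 : α.1 3 = l) : X D (α, 0) ∈ Bspan D := by
  have hbr (w v : Alg D) : br D w v ∈ Bspan D := Submodule.subset_span ⟨w, v, rfl⟩
  by_cases hl : l = 0
  · have he : e ≠ 0 := fun he => hel (by rw [he, hl])
    have h : br D (X D (sigmaΓ D, 0)) (X D (α - (sigmaΓ D + sigmaΓ D), 0)) = e • X D (α, 0) := by
      rw [br_eq_adFactor_mul (X_mem_Apart_zero (sigmaΓ_mem_Γ₀ D) (zero_mem _))
        (X_mem_Apart (e := e) (l := 0) (by simp [h1]) (by simp [h3, hl]) (zero_mem _))]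
      simp [adFactor_X, X_mul_X]
    exact mem_of_smul_mem_of_ne_zero he (h ▸ hbr _ _)
  · have h : br D 1 (X D (α, 0)) = l • X D (α, 0) := by
      rw [br_eq_adFactor_mul (one_mem_Apart_zero D) (X_mem_Apart h1 h3 (zero_mem _)),
        ← X_zero_zero, adFactor_X]
      simp [X_mul_X]
    exact mem_of_smul_mem_of_ne_zero hl (h ▸ hbr _ _)

variable (D) in
noncomputable def adAlg (e l : F) : Subalgebra F (Alg D) :=
  Algebra.adjoin F (adFactor D e l '' Bpart D 0 0)

lemma adFactor_X_mem_adAlg (h2 : ∃ α ∈ D.Γ, α 1 ≠ 0) {β : D.Γ} (hβ : β ∈ Γ₀ D)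
    (hβ0 : β.1 0 ≠ 1) {k : ↥(Jmon D.m)} (hk : k ∈ J₀ D.m) :
    adFactor D e l (X D (β, k)) ∈ adAlg D e l :=
  Algebra.subset_adjoin ⟨_, X_mem_Bpart_zero h2 hβ hβ0 hk, rfl⟩

lemma X_mk_zero_mem_adAlg_of_l_eq_zero [CharZero F] (h2 : ∃ α ∈ D.Γ, α 1 ≠ 0) (he : e ≠ 0)
    {ν : D.Γ} (hν : ν ∈ Γ₀ D) : X D (ν, 0) ∈ adAlg D e 0 := by
  have good : ∀ β ∈ Γ₀ D, β.1 0 ≠ 1 → β.1 0 ≠ 2 → X D (β, 0) ∈ adAlg D e 0 := by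
    intro β hβ hβ1 hβ2
    have h := adFactor_X_mem_adAlg (e := e) (l := 0) h2 (sub_mem hβ (sigmaΓ_mem_Γ₀ D))
      (by simpa [sub_eq_iff_eq_add, one_add_one_eq_two] using hβ2) (zero_mem _)
    have hT : adFactor D e 0 (X D (β - sigmaΓ D, 0)) = (e * (β.1 0 - 1)) • X D (β, 0) := by
      simp [adFactor_X]
    rw [hT] at h
    exact mem_of_smul_mem_of_ne_zero (mul_ne_zero he (sub_ne_zero.mpr hβ1)) h
  by_cases hν0 : ν.1 0 ≠ 1 ∧ ν.1 0 ≠ 2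
  · exact good ν hν hν0.1 hν0.2
  have h3σ : 3 • sigmaΓ D ∈ Γ₀ D := nsmul_mem (sigmaΓ_mem_Γ₀ D) 3
  rw [show X D (ν, 0) = X D (ν + 3 • sigmaΓ D, 0) * X D (-(3 • sigmaΓ D), 0) by
    simp [X_mul_X]]
  have hν0' : ν.1 0 = 1 ∨ ν.1 0 = 2 := by tauto
  refine mul_mem (good _ (add_mem hν h3σ) ?_ ?_) (good _ (neg_mem h3σ) ?_ ?_) <;>
    rcases hν0' with h | h <;> norm_num [h]

lemma X_mk_zero_mem_adAlg_of_l_ne_zero [CharZero F] (h2 : ∃ α ∈ D.Γ, α 1 ≠ 0) (hl : l ≠ 0)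
    {ν : D.Γ} (hν : ν ∈ Γ₀ D) : X D (ν, 0) ∈ adAlg D e l := by
  have hδ := deltaΓ_mem_Γ₀ D
  set μ := ν - (deltaΓ D + deltaΓ D)
  have hμ : μ ∈ Γ₀ D := sub_mem hν (add_mem hδ hδ)
  obtain ⟨ρ, hρ, hρ0, hμρ0⟩ : ∃ ρ ∈ Γ₀ D, ρ.1 0 ≠ 1 ∧ μ.1 0 - ρ.1 0 ≠ 1 := by
    by_cases h : μ.1 0 = 1
    · refine ⟨sigmaΓ D + sigmaΓ D, add_mem (sigmaΓ_mem_Γ₀ D) (sigmaΓ_mem_Γ₀ D), ?_, ?_⟩ <;>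
        norm_num [h]
    · exact ⟨0, zero_mem _, by simp, by simpa using h⟩
  let f (β : D.Γ) := adFactor D e l (X D (ρ + β, 0)) * adFactor D e l (X D (μ - (ρ + β), 0))
  have hf : ∀ β ∈ Γ₀ D, β.1 0 = 0 → f β ∈ adAlg D e l := fun β hβ hβ0 =>
    mul_mem (adFactor_X_mem_adAlg h2 (add_mem hρ hβ) (by simpa [hβ0] using hρ0) (zero_mem _))
      (adFactor_X_mem_adAlg h2 (sub_mem hμ (add_mem hρ hβ)) (by simpa [hβ0] using hμρ0)
        (zero_mem _))
  -- `f (b • δ)` is quadratic in `b` with leading coefficient `-λ² δ₃² x^{ν,0}`: take its second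
  -- difference.
  have hdiff : f 0 - (2 : F) • f (deltaΓ D) + f (deltaΓ D + deltaΓ D)
      = (-2 * l ^ 2 * D.d3 ^ 2) • X D (ν, 0) := by
    have hν' : deltaΓ D + deltaΓ D + μ = ν := add_sub_cancel _ _
    simp only [f, adFactor_X_mul_adFactor_X, hν', add_zero, AddSubgroup.coe_add, coe_deltaΓ,
      Pi.add_apply, Matrix.cons_val, ZeroMemClass.coe_zero, Pi.zero_apply]
    module
  have h := add_mem (sub_mem (hf 0 (zero_mem _) rfl) (Subalgebra.smul_mem _ (hf _ hδ (by simp)) 2))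
    (hf _ (add_mem hδ hδ) (by simp))
  rw [hdiff] at h
  exact mem_of_smul_mem_of_ne_zero (by simp [hl, D.d3_ne]) h

-- `c • x^{0,k}` differs from `adFactor D e l x^{γ,k}` by terms of lower degree in `k`.
lemma X_zero_mk_mem_adAlg (h2 : ∃ α ∈ D.Γ, α 1 ≠ 0)
    (hX : ∀ ν ∈ Γ₀ D, X D (ν, 0) ∈ adAlg D e l) {γ : D.Γ} (hγ : γ ∈ Γ₀ D) (hγ0 : γ.1 0 ≠ 1)
    {c : F} (hc : c ≠ 0) (hT : adFactor D e l (X D (γ, 0)) = c • X D (0, 0)) {k : ↥(Jmon D.m)}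
    (hk : k ∈ J₀ D.m) : X D (0, k) ∈ adAlg D e l := by
  induction hn : k.1 0 + k.1 2 using Nat.strong_induction_on generalizing k with
  | _ n ih =>
  have lower : ∀ p, (p = 0 ∨ p = 2) → ∀ β ∈ Γ₀ D,
      (k.1 p : F) • X D (β, subE k p) ∈ adAlg D e l := by
    intro p hp β hβ
    obtain hkp | hkp := Nat.eq_zero_or_pos (k.1 p)
    · simp [hkp]
    have hsub := ih _ (by rcases hp with rfl | rfl <;> simp [subE_apply] <;> omega)
      (subE_mem_J₀ hk p) rfl
    rw [show X D (β, subE k p) = X D (β, 0) * X D (0, subE k p) by simp [X_mul_X]]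
    exact Subalgebra.smul_mem _ (mul_mem (hX β hβ) hsub) _
  have h := adFactor_X_mem_adAlg (e := e) (l := l) h2 hγ hγ0 hk
  rw [adFactor_X_eq_mul_add, hT, X_zero_zero, smul_mul_assoc, one_mul] at h
  have h' := sub_mem (sub_mem h
    (Subalgebra.smul_mem _ (lower 2 (.inr rfl) _ (add_mem (deltaΓ_mem_Γ₀ D) hγ)) l))
    (Subalgebra.smul_mem _ (lower 0 (.inl rfl) _ (add_mem (sigmaΓ_mem_Γ₀ D) hγ)) e)
  rw [add_sub_cancel_right, add_sub_cancel_right] at h'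
  exact mem_of_smul_mem_of_ne_zero hc h'

lemma X_mem_adAlg [CharZero F] (h2 : ∃ α ∈ D.Γ, α 1 ≠ 0) (hel : (e, l) ≠ (0, 0)) {ν : D.Γ}
    (hν : ν ∈ Γ₀ D) {k : ↥(Jmon D.m)} (hk : k ∈ J₀ D.m) : X D (ν, k) ∈ adAlg D e l := by
  obtain ⟨hX, hk0⟩ : (∀ ν ∈ Γ₀ D, X D (ν, 0) ∈ adAlg D e l) ∧ X D (0, k) ∈ adAlg D e l := by
    by_cases hl : l = 0
    · subst hl
      have he : e ≠ 0 := fun he => hel (by rw [he])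
      have hX := fun ν (hν : ν ∈ Γ₀ D) => X_mk_zero_mem_adAlg_of_l_eq_zero h2 he hν
      exact ⟨hX, X_zero_mk_mem_adAlg h2 hX (neg_mem (sigmaΓ_mem_Γ₀ D)) (by norm_num)
        (neg_ne_zero.mpr he) (by simp [adFactor_X_mk_zero]) hk⟩
    · have hX := fun ν (hν : ν ∈ Γ₀ D) => X_mk_zero_mem_adAlg_of_l_ne_zero (e := e) h2 hl hν
      exact ⟨hX, X_zero_mk_mem_adAlg h2 hX (zero_mem _) (by simp) hl
        (by simp [adFactor_X_mk_zero]) hk⟩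
  rw [show X D (ν, k) = X D (ν, 0) * X D (0, k) by simp [X_mul_X]]
  exact mul_mem (hX ν hν) hk0

lemma X_mul_mem_of_mem_adAlg {N : Submodule F (Alg D)} (hN : IsAdStable D N) {α : D.Γ}
    (h1 : α.1 1 = e) (h3 : α.1 3 = l) (hαN : X D (α, 0) ∈ N) {r : Alg D}
    (hr : r ∈ adAlg D e l) : X D (α, 0) * r ∈ N := by
  let G := Apart D 0 0 ⊓ N.comap (LinearMap.mulLeft F (X D (α, 0)))
  suffices ∀ a ∈ G, r * a ∈ G by
    simpa using (this 1 ⟨one_mem_Apart_zero D, by simpa using hαN⟩).2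
  induction hr using Algebra.adjoin_induction with
  | mem x hx =>
    obtain ⟨w, hw, rfl⟩ := hx
    intro a ha
    refine ⟨by simpa using mul_mem_Apart (adFactor_mem_Apart_zero hw.2) ha.1, ?_⟩
    have hXa : X D (α, 0) * a ∈ Apart D e l := by
      simpa using mul_mem_Apart (X_mem_Apart h1 h3 (zero_mem _)) ha.1
    simpa [mul_left_comm, br_eq_adFactor_mul hw.2 hXa] using hN w hw _ ha.2
  | algebraMap c =>
    intro a ha
    simpa [Algebra.smul_def] using G.smul_mem c ha
  | add x y _ _ hx hy =>
    intro a ha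
    rw [add_mul]
    exact add_mem (hx a ha) (hy a ha)
  | mul x y _ _ hx hy =>
    intro a ha
    rw [mul_assoc]
    exact hx _ (hy a ha)

lemma Bpart_le_of_X_mem [CharZero F] (h2 : ∃ α ∈ D.Γ, α 1 ≠ 0) (hel : (e, l) ≠ (0, 0))
    {N : Submodule F (Alg D)} (hN : IsAdStable D N) {α : D.Γ} (h1 : α.1 1 = e)
    (h3 : α.1 3 = l) (hαN : X D (α, 0) ∈ N) : Bpart D e l ≤ N := by
  refine inf_le_right.trans (Submodule.span_le.mpr ?_)
  rintro _ ⟨β, i, hβ1, hβ3, hi1, hi3, rfl⟩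
  rw [SetLike.mem_coe, show X D (β, i) = X D (α, 0) * X D (β - α, i) by simp [X_mul_X]]
  exact X_mul_mem_of_mem_adAlg hN h1 h3 hαN
    (X_mem_adAlg h2 hel (by simp [mem_Γ₀, h1, h3, hβ1, hβ3]) ⟨hi1, hi3⟩)

instance [CharZero F] : TwoUniqueSums (↥D.Γ × ↥(Jmon D.m)) :=
  have : TwoUniqueSums D.Γ := TwoUniqueSums.of_injective_addHom D.Γ.subtype.toAddHom
    Subtype.val_injective inferInstance
  have : TwoUniqueSums (Jmon D.m) := TwoUniqueSums.of_injective_addHom (Jmon D.m).subtype.toAddHom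
    Subtype.val_injective inferInstance
  inferInstance

lemma eq_smul_X_of_generates [CharZero F] (hel : (e, l) ≠ (0, 0)) {α₀ : D.Γ}
    (h1 : α₀.1 1 = e) (h3 : α₀.1 3 = l) {u : Alg D} (hu : u ∈ Apart D e l)
    (hgen : ∀ N : Submodule F (Alg D), IsAdStable D N → u ∈ N → Bpart D e l ≤ N) :
    ∃ c : F, c ≠ 0 ∧ ∃ α : D.Γ, α.1 1 = e ∧ α.1 3 = l ∧ u = c • X D (α, 0) := by
  let N₀ := (Apart D 0 0).map (LinearMap.mulLeft F u)
  have hN₀ : IsAdStable D N₀ := by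
    rintro w hw _ ⟨a, ha, rfl⟩
    refine ⟨adFactor D e l w * a,
      by simpa using mul_mem_Apart (adFactor_mem_Apart_zero hw.2) ha, ?_⟩
    rw [LinearMap.mulLeft_apply, LinearMap.mulLeft_apply,
      br_eq_adFactor_mul hw.2 (by simpa using mul_mem_Apart hu ha), mul_left_comm]
  obtain ⟨a, -, hua⟩ := hgen N₀ hN₀ ⟨1, one_mem_Apart_zero D, mul_one u⟩
    ⟨X_mem_Bspan_of_weight_ne_zero hel h1 h3, X_mem_Apart h1 h3 (zero_mem _)⟩
  obtain ⟨⟨β, j⟩, z, c, hc, hsum, rfl⟩ :=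
    AddMonoidAlgebra.exists_eq_single_of_mul_eq_single one_ne_zero hua
  have hj : j = 0 := Subtype.ext (add_eq_zero.mp (congrArg (·.1) (congrArg Prod.snd hsum))).1
  obtain ⟨hβ1, hβ3⟩ := weight_eq_of_mem_support hu (g := (β, j)) (by simp [hc])
  exact ⟨c, hc, β, hβ1, hβ3, by simp [X, hj]⟩

end

theorem Bpart_cyclic_general (F : Type*) [Field F] [CharZero F] (D : Datum F)
    (h2 : ∃ α ∈ D.Γ, α 1 ≠ 0) (eta lam : F) :
    (∀ u ∈ Bpart D 0 0, ∀ v ∈ Bpart D 0 0, br D u v = 0) ∧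
    (∀ u ∈ Bpart D 0 0, ∀ v ∈ Bpart D eta lam, br D u v ∈ Bpart D eta lam) ∧
    (((eta, lam) : F × F) ≠ (0, 0) → (∃ α₀ ∈ D.Γ, α₀ 1 = eta ∧ α₀ 3 = lam) →
      ∀ u ∈ Bpart D eta lam,
        ((∀ N : Submodule F (Alg D),
            (∀ w ∈ Bpart D 0 0, ∀ v ∈ N, br D w v ∈ N) → u ∈ N → Bpart D eta lam ≤ N)
          ↔ ∃ c : F, c ≠ 0 ∧ ∃ α : D.Γ, α.1 1 = eta ∧ α.1 3 = lam ∧ u = c • X D (α, 0))) := by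
  refine ⟨fun u hu v hv => br_eq_zero_of_mem_Apart_zero hu.2 hv.2,
    fun u hu v hv => br_mem_Bpart hu hv, ?_⟩
  rintro hel ⟨α₀, hα₀, h1, h3⟩ u hu
  refine ⟨eq_smul_X_of_generates hel (α₀ := ⟨α₀, hα₀⟩) h1 h3 hu.2, ?_⟩
  rintro ⟨c, hc, α, hα1, hα3, rfl⟩ N hN huN
  exact Bpart_le_of_X_mem h2 hel hN hα1 hα3 (mem_of_smul_mem_of_ne_zero hc huN)

/-- Claim 3: assume `π₂ ≠ 0` and `π₄ ≠ 0`.  Then `B_{0,0}` is an abelian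
Lie subalgebra, each `B_{η,λ}` is a `B_{0,0}`-module under the adjoint action, and for
`(η,λ) ≠ (0,0)` in the image of `α ↦ (α₂,α₄)` the module `B_{η,λ}` is cyclic, its
generators being exactly the nonzero scalar multiples of the `x^{α,0}` with
`(α₂,α₄) = (η,λ)`. -/
theorem Bpart_cyclic (F : Type*) [Field F] [CharZero F] [IsAlgClosed F] (D : Datum F)
    (h2 : ∃ α ∈ D.Γ, α 1 ≠ 0) (h4 : ∃ α ∈ D.Γ, α 3 ≠ 0) (eta lam : F) :
    (∀ u ∈ Bpart D 0 0, ∀ v ∈ Bpart D 0 0, br D u v = 0) ∧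
    (∀ u ∈ Bpart D 0 0, ∀ v ∈ Bpart D eta lam, br D u v ∈ Bpart D eta lam) ∧
    (((eta, lam) : F × F) ≠ (0, 0) → (∃ α₀ ∈ D.Γ, α₀ 1 = eta ∧ α₀ 3 = lam) →
      ∀ u ∈ Bpart D eta lam,
        ((∀ N : Submodule F (Alg D),
            (∀ w ∈ Bpart D 0 0, ∀ v ∈ N, br D w v ∈ N) → u ∈ N → Bpart D eta lam ≤ N)
          ↔ ∃ c : F, c ≠ 0 ∧ ∃ α : D.Γ, α.1 1 = eta ∧ α.1 3 = lam ∧ u = c • X D (α, 0))) :=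
  Bpart_cyclic_general F D h2 eta lam

end SuBlock
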